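/- arXiv:1509.04828 — 2 statements merged into one kernel-verified Lean document; each statement's English description precedes it below -/
import Mathlib

section
/- Equivalence of the two penalized criteria (Proposition 2.1). Let K, p ≥ 1, and for each category k = 1,…,K let l_k be the pseudo-log-likelihood of the Ising model with main effects on the n_k observations of category k. Consider (i) the two-parameter criterion F_{η1,η2}(Φ, Γ^{(1)},…,Γ^{(K)}) = Σ_{k=1}^K l_k(Θ^{(k)}) − η1 Σ_{j<j'} φ_{j,j'} − η2 Σ_{j<j'} Σ_{k=1}^K |γ^{(k)}_{j,j'}|, maximized over symmetric Φ = (φ_{j,j'}) with φ_{j,j'} ≥ 0 off-diagonal and φ_{j,j} = 1, and symmetric Γ^{(k)} = (γ^{(k)}_{j,j'}), where Θ^{(k)} = Φ · Γ^{(k)} (entrywise product); and (ii) the single-parameter criterion F_λ(Θ^{(1)},…,Θ^{(K)}) = Σ_{k=1}^K l_k(Θ^{(k)}) − λ Σ_{j<j'} √(Σ_{k=1}^K |θ^{(k)}_{j,j'}|), maximized over symmetric Θ^{(1)},…,Θ^{(K)}. Suppose η1, η2 > 0 and λ = 2√(η1 η2). Then: if (Θ̂^{(1)},…,Θ̂^{(K)})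 is a local maximizer of F_λ, there exists a local maximizer (Φ̂, Γ̂^{(1)},…,Γ̂^{(K)}) of F_{η1,η2} with Θ̂^{(k)} = Φ̂ · Γ̂^{(k)} for all k; conversely, if (Φ̂, Γ̂^{(1)},…,Γ̂^{(K)}) is a local maximizer of F_{η1,η2}, then (Φ̂ · Γ̂^{(1)},…,Φ̂ · Γ̂^{(K)}) is a local maximizer of F_λ. -/
open Filter Finset Matrix

noncomputable section

/-- Real value of a binary (0/1) observation. -/
def toR (b : Bool) : ℝ := if b then 1 else 0

/-- Index set of pairs (j,j') with j < j'. -/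
abbrev PairIdx (p : ℕ) := {q : Fin p × Fin p // q.1 < q.2}

/-- Symmetric extension of a vector indexed by pairs j < j'. -/
def symExt {p : ℕ} (θ : PairIdx p → ℝ) (j j' : Fin p) : ℝ :=
  if h : j < j' then θ ⟨(j, j'), h⟩ else if h' : j' < j then θ ⟨(j', j), h'⟩ else 0

/-- Energy of the main-effect-free Ising model. -/
def isingEnergy {p : ℕ} (θ : PairIdx p → ℝ) (x : Fin p → Bool) : ℝ :=
  ∑ e : PairIdx p, θ e * toR (x e.1.1) * toR (x e.1.2)

/-- Pmf of the main-effect-free Ising model. -/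
def isingPmf {p : ℕ} (θ : PairIdx p → ℝ) (x : Fin p → Bool) : ℝ :=
  Real.exp (isingEnergy θ x) / ∑ y : Fin p → Bool, Real.exp (isingEnergy θ y)

/-- Energy of the Ising model with main effects, parameter a symmetric matrix. -/
def isingEnergyFull {p : ℕ} (Θ : Matrix (Fin p) (Fin p) ℝ) (x : Fin p → Bool) : ℝ :=
  ∑ j, Θ j j * toR (x j) + ∑ e : PairIdx p, Θ e.1.1 e.1.2 * toR (x e.1.1) * toR (x e.1.2)

/-- Pmf of the Ising model with main effects. -/
def isingPmfFull {p : ℕ} (Θ : Matrix (Fin p) (Fin p) ℝ) (x : Fin p → Bool) : ℝ :=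
  Real.exp (isingEnergyFull Θ x) / ∑ y : Fin p → Bool, Real.exp (isingEnergyFull Θ y)

/-- Local field at node j (no main effects). -/
def localField {p : ℕ} (θ : PairIdx p → ℝ) (x : Fin p → Bool) (j : Fin p) : ℝ :=
  ∑ j' ∈ Finset.univ.erase j, symExt θ j j' * toR (x j')

/-- One-observation pseudo-log-likelihood (no main effects). -/
def pllOne {p : ℕ} (x : Fin p → Bool) (θ : PairIdx p → ℝ) : ℝ :=
  ∑ j, (toR (x j) * localField θ x j - Real.log (1 + Real.exp (localField θ x j)))

/-- Pseudo-log-likelihood of n observations (no main effects). -/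
def pll {p n : ℕ} (x : Fin n → Fin p → Bool) (θ : PairIdx p → ℝ) : ℝ :=
  (n : ℝ)⁻¹ * ∑ i, pllOne (x i) θ

/-- One-observation pseudo-log-likelihood with main effects (matrix parameter). -/
def pllMainOne {p : ℕ} (x : Fin p → Bool) (Θ : Matrix (Fin p) (Fin p) ℝ) : ℝ :=
  ∑ j, (toR (x j) * (Θ j j + ∑ j' ∈ Finset.univ.erase j, Θ j j' * toR (x j'))
    - Real.log (1 + Real.exp (Θ j j + ∑ j' ∈ Finset.univ.erase j, Θ j j' * toR (x j'))))

/-- Pseudo-log-likelihood with main effects of n observations. -/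
def pllMain {p n : ℕ} (x : Fin n → Fin p → Bool) (Θ : Matrix (Fin p) (Fin p) ℝ) : ℝ :=
  (n : ℝ)⁻¹ * ∑ i, pllMainOne (x i) Θ

/-- Entrywise (Schur--Hadamard) product of matrices. -/
def hprod {p : ℕ} (A B : Matrix (Fin p) (Fin p) ℝ) : Matrix (Fin p) (Fin p) ℝ :=
  Matrix.of fun i j => A i j * B i j

/-- Partial derivative of l at θ in coordinate e. -/
def gradAt {p : ℕ} (l : (PairIdx p → ℝ) → ℝ) (θ : PairIdx p → ℝ) (e : PairIdx p) : ℝ :=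
  fderiv ℝ l θ (Pi.single e 1)

/-- Hessian matrix of l at θ. -/
def hessAt {p : ℕ} (l : (PairIdx p → ℝ) → ℝ) (θ : PairIdx p → ℝ) :
    Matrix (PairIdx p) (PairIdx p) ℝ :=
  Matrix.of fun e e' => fderiv ℝ (fun t => fderiv ℝ l t (Pi.single e' 1)) θ (Pi.single e 1)

/-- Design matrix of an observation: column (j,j') has x_{j'} in row j and x_j in row j'. -/
def designMat {p : ℕ} (x : Fin p → Bool) : Matrix (Fin p) (PairIdx p) ℝ :=
  Matrix.of fun j e => if j = e.1.1 then toR (x e.1.2) else if j = e.1.2 then toR (x e.1.1) else 0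

/-- Probability of E under the weight w on a finite sample space. -/
def finProb {Ω : Type*} [Fintype Ω] (w : Ω → ℝ) (E : Set Ω) : ℝ :=
  ∑ ω, Set.indicator E w ω

/-- Euclidean norm. -/
def euclNorm {ι : Type*} [Fintype ι] (v : ι → ℝ) : ℝ := Real.sqrt (∑ i, v i ^ 2)

/-- Sup norm of a vector. -/
def supNorm {ι : Type*} [Fintype ι] (v : ι → ℝ) : ℝ := ⨆ i, |v i|

/-- Smallest eigenvalue of a symmetric matrix, via the Rayleigh quotient. -/
def lamMin {ι : Type*} [Fintype ι] (A : Matrix ι ι ℝ) : ℝ :=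
  ⨅ v : {v : ι → ℝ // ∑ i, v i ^ 2 = 1}, v.1 ⬝ᵥ A.mulVec v.1

/-- Largest eigenvalue of a symmetric matrix, via the Rayleigh quotient. -/
def lamMax {ι : Type*} [Fintype ι] (A : Matrix ι ι ℝ) : ℝ :=
  ⨆ v : {v : ι → ℝ // ∑ i, v i ^ 2 = 1}, v.1 ⬝ᵥ A.mulVec v.1

/-- Maximum absolute row sum norm. -/
def rowSumNorm {ι κ : Type*} [Fintype ι] [Fintype κ] (A : Matrix ι κ ℝ) : ℝ :=
  ⨆ i, ∑ j, |A i j|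

/-- Submatrix with rows in S and columns in T. -/
def subm {ι : Type*} (A : Matrix ι ι ℝ) (S T : Finset ι) : Matrix ↥S ↥T ℝ :=
  A.submatrix (fun i => i.1) (fun j => j.1)

/-- Support of a parameter vector, as a finset of pairs. -/
def suppF {p : ℕ} (θ : PairIdx p → ℝ) : Finset (PairIdx p) :=
  Finset.univ.filter (fun e => θ e ≠ 0)

/-- Union of the supports over the K categories. -/
def unionSupp {p K : ℕ} (θb : Fin K → PairIdx p → ℝ) : Finset (PairIdx p) :=
  Finset.univ.filter (fun e => ∃ k, θb k e ≠ 0)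

/-- Population Fisher information of the pseudo-likelihood. -/
def Qpop {p : ℕ} (θb : PairIdx p → ℝ) : Matrix (PairIdx p) (PairIdx p) ℝ :=
  - ∑ x : Fin p → Bool, isingPmf θb x • hessAt (pllOne x) θb

/-- Sample Fisher information of the pseudo-likelihood at the truth. -/
def Qhat {p n : ℕ} (x : Fin n → Fin p → Bool) (θb : PairIdx p → ℝ) :
    Matrix (PairIdx p) (PairIdx p) ℝ :=
  - hessAt (pll x) θb

/-- Population second-moment matrix of the design matrices. -/
def Upop {p : ℕ} (θb : PairIdx p → ℝ) : Matrix (PairIdx p) (PairIdx p) ℝ :=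
  ∑ x : Fin p → Bool, isingPmf θb x • ((designMat x)ᵀ * designMat x)

/-- Sample second-moment matrix of the design matrices. -/
def Uhat {p n : ℕ} (x : Fin n → Fin p → Bool) : Matrix (PairIdx p) (PairIdx p) ℝ :=
  (n : ℝ)⁻¹ • ∑ i, ((designMat (x i))ᵀ * designMat (x i))

/-- Joint group-penalized pseudo-likelihood criterion F_λ. -/
def jointCrit {p K : ℕ} (nk : Fin K → ℕ) (x : ∀ k, Fin (nk k) → Fin p → Bool) (lam : ℝ)
    (θ : Fin K → PairIdx p → ℝ) : ℝ :=
  ∑ k, pll (x k) (θ k) - lam * ∑ e : PairIdx p, Real.sqrt (∑ k, |θ k e|)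

/-- Product (i.i.d. across observations and categories) weight of a multi-category sample. -/
def prodW {K p : ℕ} (nk : Fin K → ℕ) (θb : Fin K → PairIdx p → ℝ)
    (xs : ∀ k, Fin (nk k) → Fin p → Bool) : ℝ :=
  ∏ k, ∏ i, isingPmf (θb k) (xs k i)

end

/-!
For a pair `j < j'`, AM–GM gives `η1 φ + η2 ∑ₖ |γₖ| ≥ 2√(η1 η2) · √(∑ₖ |φ γₖ|)`, with equality
when the factorization is balanced, `η1 φ = η2 ∑ₖ |γₖ|`. Hence `F_{η1,η2}(Φ, Γ) ≤ F_λ(Φ ⊙ Γ)`,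
with equality at balanced factorizations. Every `Θ` has a balanced factorization,
`φ = √(η2 / η1 · ∑ₖ |θₖ|)`, `γₖ = θₖ / φ`, which depends continuously on `Θ`. Conversely a local
maximizer of `F_{η1,η2}` is balanced: scaling `φ` by `t` and the `γₖ` by `1 / t` on one pair keeps
`Φ ⊙ Γ` fixed and changes the criterion by `η1 φ (1 - t) + η2 ∑ₖ |γₖ| (1 - 1 / t)`, whose
derivative at `t = 1` must vanish. Local maximality is then transported in both directions along
the continuous maps `(Φ, Γ) ↦ Φ ⊙ Γ` and `Θ ↦ (balanced factorization of Θ)`.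
-/

open Real Set

noncomputable section

namespace PenalizedFactorization

variable {p : ℕ} {κ : Type*}

theorem sqrt_mul_mul_sqrt_mul_comm {x y a b : ℝ} (hx : 0 ≤ x) (hy : 0 ≤ y) (ha : 0 ≤ a) :
    √(x * y) * √(a * b) = √(x * a) * √(y * b) := by
  rw [sqrt_mul hx, sqrt_mul ha, sqrt_mul hx, sqrt_mul hy]
  ring

theorem two_sqrt_mul_mul_sqrt_mul_le {x y a b : ℝ} (hx : 0 ≤ x) (hy : 0 ≤ y) (ha : 0 ≤ a)
    (hb : 0 ≤ b) : 2 * √(x * y) * √(a * b) ≤ x * a + y * b := by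
  rw [mul_assoc, sqrt_mul_mul_sqrt_mul_comm hx hy ha]
  nlinarith [two_mul_le_add_sq (√(x * a)) (√(y * b)), sq_sqrt (mul_nonneg hx ha),
    sq_sqrt (mul_nonneg hy hb)]

theorem two_sqrt_mul_mul_sqrt_mul_eq {x y a b : ℝ} (hx : 0 ≤ x) (hy : 0 ≤ y) (ha : 0 ≤ a)
    (h : x * a = y * b) : 2 * √(x * y) * √(a * b) = x * a + y * b := by
  rw [mul_assoc, sqrt_mul_mul_sqrt_mul_comm hx hy ha, ← h, mul_self_sqrt (mul_nonneg hx ha), h]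
  ring

theorem sum_abs_mul_left [Fintype κ] {c : ℝ} (hc : 0 ≤ c) (f : κ → ℝ) :
    ∑ k, |c * f k| = c * ∑ k, |f k| := by
  simp only [abs_mul, abs_of_nonneg hc, Finset.mul_sum]

theorem sum_ite_eq_mul {α : Type*} [Fintype α] [DecidableEq α] (a : α) (t : ℝ) (f : α → ℝ) :
    ∑ b, (if b = a then t else 1) * f b = ∑ b, f b + (t - 1) * f a := by
  have hsplit : ∀ b, (if b = a then t else 1) * f b = f b + if b = a then (t - 1) * f a else 0 := by
    intro b; split_ifs with h <;> [subst h; skip] <;> ring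
  simp only [hsplit, Finset.sum_add_distrib, Finset.sum_ite_eq', Finset.mem_univ, if_true]

theorem two_sqrt_mul_sqrt_sum_abs_mul_le [Fintype κ] {η1 η2 φ : ℝ} (h1 : 0 ≤ η1) (h2 : 0 ≤ η2)
    (hφ : 0 ≤ φ) (γ : κ → ℝ) :
    2 * √(η1 * η2) * √(∑ k, |φ * γ k|) ≤ η1 * φ + η2 * ∑ k, |γ k| := by
  rw [sum_abs_mul_left hφ]
  exact two_sqrt_mul_mul_sqrt_mul_le h1 h2 hφ (Finset.sum_nonneg fun k _ => abs_nonneg _)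

theorem two_sqrt_mul_sqrt_sum_abs_mul_eq [Fintype κ] {η1 η2 φ : ℝ} (h1 : 0 ≤ η1) (h2 : 0 ≤ η2)
    (hφ : 0 ≤ φ) {γ : κ → ℝ} (hbal : η1 * φ = η2 * ∑ k, |γ k|) :
    2 * √(η1 * η2) * √(∑ k, |φ * γ k|) = η1 * φ + η2 * ∑ k, |γ k| := by
  rw [sum_abs_mul_left hφ]
  exact two_sqrt_mul_mul_sqrt_mul_eq h1 h2 hφ hbal

theorem abs_div_sqrt_mul_le {a b c : ℝ} (hab : |a| ≤ b) (hc : 0 < c) :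
    |a / √(c * b)| ≤ √b / √c := by
  have hb : 0 ≤ b := (abs_nonneg a).trans hab
  rcases hb.eq_or_lt with h0 | hpos
  · simp [← h0]
  · rw [abs_div, abs_of_nonneg (sqrt_nonneg _), sqrt_mul hc.le,
      div_le_div_iff₀ (by positivity) (by positivity)]
    calc |a| * √c ≤ b * √c := by gcongr
      _ = √b * (√c * √b) := by rw [mul_left_comm, mul_self_sqrt hb, mul_comm]

theorem continuous_div_sqrt_mul_of_abs_le {X : Type*} [TopologicalSpace X] {f g : X → ℝ}
    (hf : Continuous f) (hg : Continuous g) (hfg : ∀ x, |f x| ≤ g x) {c : ℝ} (hc : 0 < c) :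
    Continuous fun x => f x / √(c * g x) := by
  refine continuous_iff_continuousAt.2 fun x0 => ?_
  rcases ((abs_nonneg _).trans (hfg x0)).eq_or_lt with h0 | hpos
  · have hf0 : f x0 = 0 := abs_nonpos_iff.1 (h0 ▸ hfg x0)
    rw [ContinuousAt, hf0, zero_div]
    refine squeeze_zero_norm (fun x => abs_div_sqrt_mul_le (hfg x) hc) ?_
    simpa [← h0] using ((continuous_sqrt.comp hg).div_const (√c)).tendsto x0
  · exact hf.continuousAt.div (continuous_sqrt.comp (continuous_const.mul hg)).continuousAt
      (sqrt_ne_zero'.2 (by positivity))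

theorem eq_of_isLocalMaxOn_Ioi {f : ℝ → ℝ} {a b : ℝ} (hmax : IsLocalMaxOn f (Ioi 0) 1)
    (hf : ∀ t ∈ Ioi (0 : ℝ), f t = f 1 + a * (1 - t) + b * (1 - t⁻¹)) : a = b := by
  have hloc : IsLocalMax (fun t => f 1 + a * (1 - t) + b * (1 - t⁻¹)) 1 :=
    (hmax.congr (eventuallyEq_nhdsWithin_of_eqOn hf) (mem_Ioi.2 one_pos)).isLocalMax
      (Ioi_mem_nhds one_pos)
  have hderiv : HasDerivAt (fun t => f 1 + a * (1 - t) + b * (1 - t⁻¹)) (-a + b) 1 := by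
    have := ((hasDerivAt_const (1 : ℝ) (f 1)).add
      (((hasDerivAt_id (1 : ℝ)).const_sub 1).const_mul a)).add
      (((hasDerivAt_inv one_ne_zero).const_sub 1).const_mul b)
    exact this.congr_deriv (by norm_num)
  linarith [hloc.hasDerivAt_eq_zero hderiv]

def factorSet (p : ℕ) (κ : Type*) :
    Set (Matrix (Fin p) (Fin p) ℝ × (κ → Matrix (Fin p) (Fin p) ℝ)) :=
  {PG | PG.1.IsSymm ∧ (∀ i j, i ≠ j → 0 ≤ PG.1 i j) ∧ (∀ i, PG.1 i i = 1) ∧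
    ∀ k, (PG.2 k).IsSymm}

def symmSet (p : ℕ) (κ : Type*) : Set (κ → Matrix (Fin p) (Fin p) ℝ) :=
  {Θs | ∀ k, (Θs k).IsSymm}

def toTheta (PG : Matrix (Fin p) (Fin p) ℝ × (κ → Matrix (Fin p) (Fin p) ℝ)) :
    κ → Matrix (Fin p) (Fin p) ℝ :=
  fun k => hprod PG.1 (PG.2 k)

theorem isSymm_hprod {A B : Matrix (Fin p) (Fin p) ℝ} (hA : A.IsSymm) (hB : B.IsSymm) :
    (hprod A B).IsSymm :=
  Matrix.IsSymm.ext fun i j => by simp only [hprod, Matrix.of_apply, hA.apply, hB.apply]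

@[simp]
theorem toTheta_apply (PG : Matrix (Fin p) (Fin p) ℝ × (κ → Matrix (Fin p) (Fin p) ℝ)) (k : κ)
    (i j : Fin p) : toTheta PG k i j = PG.1 i j * PG.2 k i j :=
  rfl

theorem toTheta_mem {PG : Matrix (Fin p) (Fin p) ℝ × (κ → Matrix (Fin p) (Fin p) ℝ)}
    (hPG : PG ∈ factorSet p κ) : toTheta PG ∈ symmSet p κ :=
  fun k => isSymm_hprod hPG.1 (hPG.2.2.2 k)

theorem continuous_toTheta :
    Continuous (toTheta : Matrix (Fin p) (Fin p) ℝ × (κ → Matrix (Fin p) (Fin p) ℝ) → _) :=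
  continuous_pi fun k => continuous_matrix fun i j =>
    (continuous_fst.matrix_elem i j).mul
      (((continuous_apply k).comp continuous_snd).matrix_elem i j)

def pairScale (e : PairIdx p) (t : ℝ) : Matrix (Fin p) (Fin p) ℝ :=
  Matrix.of fun i j => if s(i, j) = s(e.1.1, e.1.2) then t else 1

def rescale (e : PairIdx p) (t : ℝ)
    (PG : Matrix (Fin p) (Fin p) ℝ × (κ → Matrix (Fin p) (Fin p) ℝ)) :
    Matrix (Fin p) (Fin p) ℝ × (κ → Matrix (Fin p) (Fin p) ℝ) :=
  (hprod (pairScale e t) PG.1, fun k => hprod (pairScale e t⁻¹) (PG.2 k))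

theorem pairScale_isSymm (e : PairIdx p) (t : ℝ) : (pairScale e t).IsSymm :=
  Matrix.IsSymm.ext fun i j => by simp only [pairScale, Matrix.of_apply, Sym2.eq_swap]

theorem pairScale_apply_self (e : PairIdx p) (t : ℝ) (i : Fin p) : pairScale e t i i = 1 := by
  have hne : s(i, i) ≠ s(e.1.1, e.1.2) := fun h =>
    e.2.ne (by rcases Sym2.eq_iff.1 h with ⟨h1, h2⟩ | ⟨h1, h2⟩ <;> rw [← h1, ← h2])
  simp only [pairScale, Matrix.of_apply, if_neg hne]

theorem pairScale_apply_pair (e e' : PairIdx p) (t : ℝ) :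
    pairScale e t e'.1.1 e'.1.2 = if e' = e then t else 1 := by
  have hiff : s(e'.1.1, e'.1.2) = s(e.1.1, e.1.2) ↔ e' = e := by
    refine ⟨fun h => ?_, fun h => h ▸ rfl⟩
    rcases Sym2.eq_iff.1 h with ⟨h1, h2⟩ | ⟨h1, h2⟩
    · exact Subtype.ext (Prod.ext h1 h2)
    · exact absurd (h1 ▸ h2 ▸ e'.2) e.2.asymm
  simp only [pairScale, Matrix.of_apply, hiff]

theorem pairScale_nonneg (e : PairIdx p) {t : ℝ} (ht : 0 ≤ t) (i j : Fin p) :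
    0 ≤ pairScale e t i j := by
  simp only [pairScale, Matrix.of_apply]; split_ifs <;> positivity

theorem continuous_pairScale (e : PairIdx p) : Continuous (pairScale e) :=
  continuous_matrix fun i j => by
    simp only [pairScale, Matrix.of_apply]
    split_ifs
    · exact continuous_id
    · exact continuous_const

theorem rescale_one (e : PairIdx p)
    (PG : Matrix (Fin p) (Fin p) ℝ × (κ → Matrix (Fin p) (Fin p) ℝ)) : rescale e 1 PG = PG := by
  refine Prod.ext ?_ (funext fun k => ?_) <;> ext i j <;>
    simp [rescale, hprod, pairScale]

theorem rescale_mem {PG : Matrix (Fin p) (Fin p) ℝ × (κ → Matrix (Fin p) (Fin p) ℝ)}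
    (hPG : PG ∈ factorSet p κ) (e : PairIdx p) {t : ℝ} (ht : 0 ≤ t) :
    rescale e t PG ∈ factorSet p κ := by
  obtain ⟨hsymm, hΦ, hdiag, hΓ⟩ := hPG
  refine ⟨isSymm_hprod (pairScale_isSymm e t) hsymm, fun i j hij => ?_, fun i => ?_,
    fun k => isSymm_hprod (pairScale_isSymm e t⁻¹) (hΓ k)⟩
  · exact mul_nonneg (pairScale_nonneg e ht i j) (hΦ i j hij)
  · simp only [rescale, hprod, Matrix.of_apply, pairScale_apply_self, hdiag, mul_one]

theorem toTheta_rescale (PG : Matrix (Fin p) (Fin p) ℝ × (κ → Matrix (Fin p) (Fin p) ℝ))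
    (e : PairIdx p) {t : ℝ} (ht : t ≠ 0) : toTheta (rescale e t PG) = toTheta PG := by
  funext k; ext i j
  simp only [toTheta_apply, rescale, hprod, pairScale, Matrix.of_apply]
  split_ifs
  · field_simp
  · ring

theorem continuousOn_rescale (e : PairIdx p)
    (PG : Matrix (Fin p) (Fin p) ℝ × (κ → Matrix (Fin p) (Fin p) ℝ)) :
    ContinuousOn (fun t => rescale e t PG) (Ioi 0) := by
  have hmul : ∀ A : Matrix (Fin p) (Fin p) ℝ, Continuous fun M => hprod M A := fun A =>
    continuous_matrix fun i j => (continuous_id.matrix_elem i j).mul continuous_const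
  refine ((hmul PG.1).comp (continuous_pairScale e)).continuousOn.prodMk
    (continuousOn_pi.2 fun k => ?_)
  exact ((hmul (PG.2 k)).comp (continuous_pairScale e)).comp_continuousOn
    (continuousOn_inv₀.mono fun t ht => ne_of_gt ht)

variable [Fintype κ]

def factorCrit (η1 η2 : ℝ) (L : (κ → Matrix (Fin p) (Fin p) ℝ) → ℝ)
    (PG : Matrix (Fin p) (Fin p) ℝ × (κ → Matrix (Fin p) (Fin p) ℝ)) : ℝ :=
  L (toTheta PG) - η1 * ∑ e : PairIdx p, PG.1 e.1.1 e.1.2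
    - η2 * ∑ e : PairIdx p, ∑ k, |PG.2 k e.1.1 e.1.2|

def groupCrit (lam : ℝ) (L : (κ → Matrix (Fin p) (Fin p) ℝ) → ℝ)
    (Θs : κ → Matrix (Fin p) (Fin p) ℝ) : ℝ :=
  L Θs - lam * ∑ e : PairIdx p, √(∑ k, |Θs k e.1.1 e.1.2|)

def sumAbs (Θs : κ → Matrix (Fin p) (Fin p) ℝ) (i j : Fin p) : ℝ :=
  ∑ k, |Θs k i j|

theorem abs_le_sumAbs (Θs : κ → Matrix (Fin p) (Fin p) ℝ) (k : κ) (i j : Fin p) :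
    |Θs k i j| ≤ sumAbs Θs i j :=
  Finset.single_le_sum (f := fun k => |Θs k i j|) (fun _ _ => abs_nonneg _) (Finset.mem_univ k)

theorem continuous_sumAbs (i j : Fin p) :
    Continuous fun Θs : κ → Matrix (Fin p) (Fin p) ℝ => sumAbs Θs i j :=
  continuous_finsetSum _ fun k _ => ((continuous_apply k).matrix_elem i j).abs

def IsBalanced (η1 η2 : ℝ) (PG : Matrix (Fin p) (Fin p) ℝ × (κ → Matrix (Fin p) (Fin p) ℝ)) :
    Prop :=
  ∀ i j, i ≠ j → η1 * PG.1 i j = η2 * sumAbs PG.2 i j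

variable {η1 η2 : ℝ} {PG : Matrix (Fin p) (Fin p) ℝ × (κ → Matrix (Fin p) (Fin p) ℝ)}

theorem factorCrit_le_groupCrit (h1 : 0 ≤ η1) (h2 : 0 ≤ η2)
    (L : (κ → Matrix (Fin p) (Fin p) ℝ) → ℝ) (hΦ : ∀ i j, i ≠ j → 0 ≤ PG.1 i j) :
    factorCrit η1 η2 L PG ≤ groupCrit (2 * √(η1 * η2)) L (toTheta PG) := by
  have hpen : 2 * √(η1 * η2) * ∑ e : PairIdx p, √(∑ k, |toTheta PG k e.1.1 e.1.2|)
      ≤ η1 * ∑ e : PairIdx p, PG.1 e.1.1 e.1.2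
        + η2 * ∑ e : PairIdx p, ∑ k, |PG.2 k e.1.1 e.1.2| := by
    rw [Finset.mul_sum, Finset.mul_sum, Finset.mul_sum, ← Finset.sum_add_distrib]
    gcongr with e
    exact two_sqrt_mul_sqrt_sum_abs_mul_le h1 h2 (hΦ _ _ e.2.ne) _
  unfold factorCrit groupCrit
  linarith

theorem factorCrit_eq_groupCrit (h1 : 0 ≤ η1) (h2 : 0 ≤ η2)
    (L : (κ → Matrix (Fin p) (Fin p) ℝ) → ℝ) (hΦ : ∀ i j, i ≠ j → 0 ≤ PG.1 i j)
    (hbal : IsBalanced η1 η2 PG) :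
    factorCrit η1 η2 L PG = groupCrit (2 * √(η1 * η2)) L (toTheta PG) := by
  have hpen : 2 * √(η1 * η2) * ∑ e : PairIdx p, √(∑ k, |toTheta PG k e.1.1 e.1.2|)
      = η1 * ∑ e : PairIdx p, PG.1 e.1.1 e.1.2
        + η2 * ∑ e : PairIdx p, ∑ k, |PG.2 k e.1.1 e.1.2| := by
    rw [Finset.mul_sum, Finset.mul_sum, Finset.mul_sum, ← Finset.sum_add_distrib]
    refine Finset.sum_congr rfl fun e _ => ?_
    exact two_sqrt_mul_sqrt_sum_abs_mul_eq h1 h2 (hΦ _ _ e.2.ne) (hbal _ _ e.2.ne)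
  unfold factorCrit groupCrit
  linarith

def balancedPhi (η1 η2 : ℝ) (Θs : κ → Matrix (Fin p) (Fin p) ℝ) : Matrix (Fin p) (Fin p) ℝ :=
  Matrix.of fun i j => if i = j then 1 else √(η2 / η1 * sumAbs Θs i j)

-- Where `balancedPhi` vanishes so does every `Θs k i j`, and `Γ = 0` there since `x / 0 = 0`.
def balancedFactor (η1 η2 : ℝ) (Θs : κ → Matrix (Fin p) (Fin p) ℝ) :
    Matrix (Fin p) (Fin p) ℝ × (κ → Matrix (Fin p) (Fin p) ℝ) :=
  (balancedPhi η1 η2 Θs, fun k => Matrix.of fun i j => Θs k i j / balancedPhi η1 η2 Θs i j)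

theorem balancedPhi_nonneg (Θs : κ → Matrix (Fin p) (Fin p) ℝ) (i j : Fin p) :
    0 ≤ balancedPhi η1 η2 Θs i j := by
  simp only [balancedPhi, Matrix.of_apply]; split_ifs <;> positivity

theorem eq_zero_of_balancedPhi_eq_zero (h1 : 0 < η1) (h2 : 0 < η2)
    {Θs : κ → Matrix (Fin p) (Fin p) ℝ} {i j : Fin p} (h : balancedPhi η1 η2 Θs i j = 0)
    (k : κ) : Θs k i j = 0 := by
  simp only [balancedPhi, Matrix.of_apply] at h
  split_ifs at h with hij
  · exact absurd h one_ne_zero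
  · have hs : sumAbs Θs i j ≤ 0 :=
      nonpos_of_mul_nonpos_right (sqrt_eq_zero'.1 h) (div_pos h2 h1)
    exact abs_nonpos_iff.1 ((abs_le_sumAbs Θs k i j).trans hs)

theorem toTheta_balancedFactor (h1 : 0 < η1) (h2 : 0 < η2)
    (Θs : κ → Matrix (Fin p) (Fin p) ℝ) : toTheta (balancedFactor η1 η2 Θs) = Θs := by
  funext k; ext i j
  simp only [toTheta_apply, balancedFactor, Matrix.of_apply]
  by_cases hΦ : balancedPhi η1 η2 Θs i j = 0
  · simp [hΦ, eq_zero_of_balancedPhi_eq_zero h1 h2 hΦ k]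
  · exact mul_div_cancel₀ _ hΦ

theorem isBalanced_balancedFactor (h1 : 0 < η1) (h2 : 0 < η2)
    (Θs : κ → Matrix (Fin p) (Fin p) ℝ) : IsBalanced η1 η2 (balancedFactor η1 η2 Θs) := by
  intro i j hij
  have hsum : ∑ k, |Θs k i j / balancedPhi η1 η2 Θs i j|
      = sumAbs Θs i j / balancedPhi η1 η2 Θs i j := by
    simp only [sumAbs, Finset.sum_div, abs_div, abs_of_nonneg (balancedPhi_nonneg Θs i j)]
  show η1 * balancedPhi η1 η2 Θs i j = η2 * ∑ k, |Θs k i j / balancedPhi η1 η2 Θs i j|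
  rw [hsum]
  by_cases hΦ : balancedPhi η1 η2 Θs i j = 0
  · simp [hΦ]
  · have hsq : balancedPhi η1 η2 Θs i j * balancedPhi η1 η2 Θs i j
        = η2 / η1 * sumAbs Θs i j := by
      simp only [balancedPhi, Matrix.of_apply, if_neg hij]
      exact mul_self_sqrt
        (mul_nonneg (div_pos h2 h1).le (Finset.sum_nonneg fun _ _ => abs_nonneg _))
    rw [mul_div_assoc', eq_div_iff hΦ, mul_assoc, hsq]
    field_simp

theorem balancedFactor_mem {Θs : κ → Matrix (Fin p) (Fin p) ℝ} (hΘ : Θs ∈ symmSet p κ) :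
    balancedFactor η1 η2 Θs ∈ factorSet p κ := by
  have hs : (balancedPhi η1 η2 Θs).IsSymm := Matrix.IsSymm.ext fun i j => by
    simp only [balancedPhi, Matrix.of_apply, sumAbs, eq_comm (a := j), (hΘ _).apply]
  refine ⟨hs, fun i j _ => balancedPhi_nonneg Θs i j,
    fun i => by simp [balancedFactor, balancedPhi], fun k => Matrix.IsSymm.ext fun i j => ?_⟩
  simp only [balancedFactor, Matrix.of_apply, (hΘ k).apply, hs.apply]

theorem continuous_balancedFactor (h1 : 0 < η1) (h2 : 0 < η2) :
    Continuous (balancedFactor η1 η2 : (κ → Matrix (Fin p) (Fin p) ℝ) → _) := by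
  have hΦ : Continuous (balancedPhi η1 η2 : (κ → Matrix (Fin p) (Fin p) ℝ) → _) :=
    continuous_matrix fun i j => by
      simp only [balancedPhi, Matrix.of_apply]
      split_ifs
      · exact continuous_const
      · exact continuous_sqrt.comp (continuous_const.mul (continuous_sumAbs i j))
  refine hΦ.prodMk (continuous_pi fun k => continuous_matrix fun i j => ?_)
  simp only [balancedPhi, Matrix.of_apply]
  split_ifs
  · simpa using (continuous_apply k).matrix_elem i j
  · exact continuous_div_sqrt_mul_of_abs_le ((continuous_apply k).matrix_elem i j)
      (continuous_sumAbs i j) (fun Θs => abs_le_sumAbs Θs k i j) (div_pos h2 h1)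

theorem balancedFactor_toTheta (h1 : 0 < η1) (h2 : 0 < η2) (hPG : PG ∈ factorSet p κ)
    (hbal : IsBalanced η1 η2 PG) : balancedFactor η1 η2 (toTheta PG) = PG := by
  obtain ⟨-, hΦ, hdiag, -⟩ := hPG
  have hphi : balancedPhi η1 η2 (toTheta PG) = PG.1 := by
    ext i j
    simp only [balancedPhi, Matrix.of_apply]
    split_ifs with hij
    · rw [hij, hdiag]
    · have hsq : η2 / η1 * sumAbs (toTheta PG) i j = PG.1 i j ^ 2 := by
        simp only [sumAbs, toTheta_apply, sum_abs_mul_left (hΦ i j hij)]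
        rw [div_mul_eq_mul_div, div_eq_iff h1.ne', mul_left_comm, ← sumAbs, ← hbal i j hij]
        ring
      rw [hsq, sqrt_sq (hΦ i j hij)]
  refine Prod.ext hphi (funext fun k => ?_)
  ext i j
  simp only [balancedFactor, Matrix.of_apply, hphi, toTheta_apply]
  by_cases h0 : PG.1 i j = 0
  · have hij : i ≠ j := fun h => by simp [h, hdiag] at h0
    have hs : sumAbs PG.2 i j = 0 := by
      simpa [h0, h2.ne'] using (hbal i j hij).symm
    have hγ : PG.2 k i j = 0 := abs_nonpos_iff.1 (hs ▸ abs_le_sumAbs PG.2 k i j)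
    simp [h0, hγ]
  · exact mul_div_cancel_left₀ _ h0

theorem factorCrit_balancedFactor (h1 : 0 < η1) (h2 : 0 < η2)
    (L : (κ → Matrix (Fin p) (Fin p) ℝ) → ℝ) (Θs : κ → Matrix (Fin p) (Fin p) ℝ) :
    factorCrit η1 η2 L (balancedFactor η1 η2 Θs) = groupCrit (2 * √(η1 * η2)) L Θs := by
  rw [factorCrit_eq_groupCrit h1.le h2.le L (fun i j _ => balancedPhi_nonneg Θs i j)
    (isBalanced_balancedFactor h1 h2 Θs), toTheta_balancedFactor h1 h2]

theorem factorCrit_rescale (L : (κ → Matrix (Fin p) (Fin p) ℝ) → ℝ) (e : PairIdx p) {t : ℝ}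
    (ht : 0 < t) :
    factorCrit η1 η2 L (rescale e t PG) = factorCrit η1 η2 L PG
      + η1 * PG.1 e.1.1 e.1.2 * (1 - t) + η2 * sumAbs PG.2 e.1.1 e.1.2 * (1 - t⁻¹) := by
  have hΦ : ∑ e' : PairIdx p, (rescale e t PG).1 e'.1.1 e'.1.2
      = ∑ e' : PairIdx p, PG.1 e'.1.1 e'.1.2 + (t - 1) * PG.1 e.1.1 e.1.2 := by
    simp only [rescale, hprod, Matrix.of_apply, pairScale_apply_pair]
    exact sum_ite_eq_mul e t _
  have hΓ : ∑ e' : PairIdx p, ∑ k, |(rescale e t PG).2 k e'.1.1 e'.1.2|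
      = ∑ e' : PairIdx p, sumAbs PG.2 e'.1.1 e'.1.2 + (t⁻¹ - 1) * sumAbs PG.2 e.1.1 e.1.2 := by
    simp only [rescale, hprod, Matrix.of_apply, pairScale_apply_pair]
    rw [← sum_ite_eq_mul e t⁻¹]
    exact Finset.sum_congr rfl fun e' _ =>
      sum_abs_mul_left (by split_ifs <;> positivity) _
  unfold factorCrit
  rw [toTheta_rescale PG e ht.ne', hΦ, hΓ]
  simp only [sumAbs]
  ring

theorem isBalanced_of_isLocalMaxOn {L : (κ → Matrix (Fin p) (Fin p) ℝ) → ℝ}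
    (hPG : PG ∈ factorSet p κ) (hmax : IsLocalMaxOn (factorCrit η1 η2 L) (factorSet p κ) PG) :
    IsBalanced η1 η2 PG := by
  have hpair : ∀ e : PairIdx p, η1 * PG.1 e.1.1 e.1.2 = η2 * sumAbs PG.2 e.1.1 e.1.2 := by
    intro e
    have hmax' : IsLocalMaxOn (factorCrit η1 η2 L) (factorSet p κ) (rescale e 1 PG) := by
      rwa [rescale_one]
    refine eq_of_isLocalMaxOn_Ioi (hmax'.comp_continuousOn (g := fun t => rescale e t PG)
      (fun t ht => rescale_mem hPG e (le_of_lt ht)) (continuousOn_rescale e PG) (mem_Ioi.2 one_pos))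
      fun t ht => ?_
    rw [Function.comp_apply, Function.comp_apply, rescale_one, factorCrit_rescale L e ht]
  intro i j hij
  rcases hij.lt_or_gt with h | h
  · exact hpair ⟨(i, j), h⟩
  · simpa only [hPG.1.apply, sumAbs, (hPG.2.2.2 _).apply] using hpair ⟨(j, i), h⟩

theorem isLocalMaxOn_factorCrit_balancedFactor (h1 : 0 < η1) (h2 : 0 < η2)
    {L : (κ → Matrix (Fin p) (Fin p) ℝ) → ℝ} {Θs : κ → Matrix (Fin p) (Fin p) ℝ}
    (hΘ : Θs ∈ symmSet p κ) (hmax : IsLocalMaxOn (groupCrit (2 * √(η1 * η2)) L) (symmSet p κ) Θs) :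
    IsLocalMaxOn (factorCrit η1 η2 L) (factorSet p κ) (balancedFactor η1 η2 Θs) := by
  rw [← toTheta_balancedFactor h1 h2 Θs] at hmax
  have hcomp := hmax.comp_continuousOn (fun _ => toTheta_mem) continuous_toTheta.continuousOn
    (balancedFactor_mem hΘ)
  refine Filter.EventuallyLE.isLocalMaxOn ?_ ?_ hcomp
  · exact eventually_nhdsWithin_of_forall fun PG hPG =>
      factorCrit_le_groupCrit h1.le h2.le L hPG.2.1
  · rw [Function.comp_apply, toTheta_balancedFactor h1 h2, factorCrit_balancedFactor h1 h2]

theorem isLocalMaxOn_groupCrit_toTheta (h1 : 0 < η1) (h2 : 0 < η2)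
    {L : (κ → Matrix (Fin p) (Fin p) ℝ) → ℝ} (hPG : PG ∈ factorSet p κ)
    (hmax : IsLocalMaxOn (factorCrit η1 η2 L) (factorSet p κ) PG) :
    IsLocalMaxOn (groupCrit (2 * √(η1 * η2)) L) (symmSet p κ) (toTheta PG) := by
  rw [← balancedFactor_toTheta h1 h2 hPG (isBalanced_of_isLocalMaxOn hPG hmax)] at hmax
  have hcomp := hmax.comp_continuousOn (fun _ => balancedFactor_mem)
    (continuous_balancedFactor h1 h2).continuousOn (toTheta_mem hPG)
  rwa [show factorCrit η1 η2 L ∘ balancedFactor η1 η2 = groupCrit (2 * √(η1 * η2)) L from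
    funext (factorCrit_balancedFactor h1 h2 L)] at hcomp

end PenalizedFactorization

end

open PenalizedFactorization

theorem stmt_0_general (p K : ℕ) (nk : Fin K → ℕ)
    (x : ∀ k, Fin (nk k) → Fin p → Bool) (η1 η2 lam : ℝ) (hη1 : 0 < η1) (hη2 : 0 < η2)
    (hlam : lam = 2 * Real.sqrt (η1 * η2)) :
    -- F_{η1,η2}, on pairs (Φ, (Γ^{(k)})_k), with Θ^{(k)} = Φ ⊙ Γ^{(k)}
    let F2 : Matrix (Fin p) (Fin p) ℝ × (Fin K → Matrix (Fin p) (Fin p) ℝ) → ℝ :=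
      fun PG => (∑ k, pllMain (x k) (hprod PG.1 (PG.2 k)))
        - η1 * ∑ e : PairIdx p, PG.1 e.1.1 e.1.2
        - η2 * ∑ e : PairIdx p, ∑ k, |PG.2 k e.1.1 e.1.2|
    -- constraint set: Φ symmetric with nonnegative off-diagonal and unit diagonal,
    -- each Γ^{(k)} symmetric
    let D2 : Set (Matrix (Fin p) (Fin p) ℝ × (Fin K → Matrix (Fin p) (Fin p) ℝ)) :=
      {PG | PG.1.IsSymm ∧ (∀ i j, i ≠ j → 0 ≤ PG.1 i j) ∧ (∀ i, PG.1 i i = 1) ∧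
        ∀ k, (PG.2 k).IsSymm}
    -- F_λ on K-tuples of symmetric matrices
    let F1 : (Fin K → Matrix (Fin p) (Fin p) ℝ) → ℝ :=
      fun Θs => (∑ k, pllMain (x k) (Θs k))
        - lam * ∑ e : PairIdx p, Real.sqrt (∑ k, |Θs k e.1.1 e.1.2|)
    let D1 : Set (Fin K → Matrix (Fin p) (Fin p) ℝ) := {Θs | ∀ k, (Θs k).IsSymm}
    -- forward direction
    (∀ θh, θh ∈ D1 → IsLocalMaxOn F1 D1 θh →
      ∃ PG ∈ D2, IsLocalMaxOn F2 D2 PG ∧ ∀ k, θh k = hprod PG.1 (PG.2 k)) ∧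
    -- converse direction
    (∀ PG, PG ∈ D2 → IsLocalMaxOn F2 D2 PG →
      (fun k => hprod PG.1 (PG.2 k)) ∈ D1 ∧
        IsLocalMaxOn F1 D1 (fun k => hprod PG.1 (PG.2 k))) := by
  intro F2 D2 F1 D1
  subst hlam
  refine ⟨fun Θs hΘ hmax => ⟨balancedFactor η1 η2 Θs, balancedFactor_mem hΘ,
      isLocalMaxOn_factorCrit_balancedFactor hη1 hη2 hΘ hmax,
      fun k => (congrFun (toTheta_balancedFactor hη1 hη2 Θs) k).symm⟩,
    fun PG hPG hmax => ⟨toTheta_mem hPG, isLocalMaxOn_groupCrit_toTheta hη1 hη2 hPG hmax⟩⟩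

/-- Equivalence of the two penalized criteria (Proposition 2.1): with `λ = 2√(η1 η2)`,
local maximizers of the single-parameter criterion `F_λ` over symmetric matrices correspond
to local maximizers of the two-parameter criterion `F_{η1,η2}` over the factorized
parameterization `Θ^{(k)} = Φ ⊙ Γ^{(k)}`, and conversely. -/
theorem stmt_0 (p K : ℕ) (hp : 1 ≤ p) (hK : 1 ≤ K) (nk : Fin K → ℕ)
    (x : ∀ k, Fin (nk k) → Fin p → Bool) (η1 η2 lam : ℝ) (hη1 : 0 < η1) (hη2 : 0 < η2)
    (hlam : lam = 2 * Real.sqrt (η1 * η2)) :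
    -- F_{η1,η2}, on pairs (Φ, (Γ^{(k)})_k), with Θ^{(k)} = Φ ⊙ Γ^{(k)}
    let F2 : Matrix (Fin p) (Fin p) ℝ × (Fin K → Matrix (Fin p) (Fin p) ℝ) → ℝ :=
      fun PG => (∑ k, pllMain (x k) (hprod PG.1 (PG.2 k)))
        - η1 * ∑ e : PairIdx p, PG.1 e.1.1 e.1.2
        - η2 * ∑ e : PairIdx p, ∑ k, |PG.2 k e.1.1 e.1.2|
    -- constraint set: Φ symmetric with nonnegative off-diagonal and unit diagonal,
    -- each Γ^{(k)} symmetric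
    let D2 : Set (Matrix (Fin p) (Fin p) ℝ × (Fin K → Matrix (Fin p) (Fin p) ℝ)) :=
      {PG | PG.1.IsSymm ∧ (∀ i j, i ≠ j → 0 ≤ PG.1 i j) ∧ (∀ i, PG.1 i i = 1) ∧
        ∀ k, (PG.2 k).IsSymm}
    -- F_λ on K-tuples of symmetric matrices
    let F1 : (Fin K → Matrix (Fin p) (Fin p) ℝ) → ℝ :=
      fun Θs => (∑ k, pllMain (x k) (Θs k))
        - lam * ∑ e : PairIdx p, Real.sqrt (∑ k, |Θs k e.1.1 e.1.2|)
    let D1 : Set (Fin K → Matrix (Fin p) (Fin p) ℝ) := {Θs | ∀ k, (Θs k).IsSymm}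
    -- forward direction
    (∀ θh, θh ∈ D1 → IsLocalMaxOn F1 D1 θh →
      ∃ PG ∈ D2, IsLocalMaxOn F2 D2 PG ∧ ∀ k, θh k = hprod PG.1 (PG.2 k)) ∧
    -- converse direction
    (∀ PG, PG ∈ D2 → IsLocalMaxOn F2 D2 PG →
      (fun k => hprod PG.1 (PG.2 k)) ∈ D1 ∧
        IsLocalMaxOn F1 D1 (fun k => hprod PG.1 (PG.2 k))) :=
  stmt_0_general p K nk x η1 η2 lam hη1 hη2 hlam
end

section
/- Proposition A.2(i) (concentration of the minimum eigenvalue of the sample Fisher information). Fix a category k with n_k i.i.d. observations from the main-effect-free Ising distribution with true parameter θ̄^{(k)}, and assume condition (B): Λ_min(Q̄^{(k)}_{S_k,S_k}) ≥ τ_min. Then for any ε > 0, P( Λ_min(Q̂^{(k)}_{S_k,S_k}) ≤ τ_min − ε ) ≤ 2 exp( −(ε²/2)(n_k/q_k²) + 2 log q_k ). -/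
open Filter Finset Matrix

/-!
Twice differentiating the logistic pseudo-log-likelihood shows that `Q̂` is the sample mean and
`Q̄` the Ising expectation of the per-observation Fisher matrix `Xᵀ diag(σ'(Xθ)) X`, whose
entries lie in `[0, 1]` because `σ' ≤ 1/4` and each column of the design matrix `X` has two
nonzero entries in `[0, 1]`. Each entry of `Q̂ - Q̄` is therefore an average of `n` i.i.d.
centred variables in `[-1, 1]`, and Hoeffding's inequality bounds the probability that it
exceeds `ε / q` by `2 exp (-n ε² / (2 q²))`. If no entry on `S × S` does, then
`|vᵀ (Q̂ - Q̄) v| < q · (ε / q) = ε` for every unit vector `v`, so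
`Λ_min(Q̂_SS) > Λ_min(Q̄_SS) - ε ≥ τ_min - ε`; a union bound over the `q²` entries concludes.
-/

open Real

section RayleighQuotient

variable {ι : Type*} [Fintype ι]

lemma abs_dotProduct_mulVec_le {A : Matrix ι ι ℝ} {M : ℝ} (hA : ∀ i j, |A i j| ≤ M)
    (hM : 0 ≤ M) {v : ι → ℝ} (hv : ∑ i, v i ^ 2 = 1) :
    |v ⬝ᵥ A *ᵥ v| ≤ Fintype.card ι * M := by
  have hl1 : (∑ i, |v i|) ^ 2 ≤ Fintype.card ι := by
    simpa [sq_abs, hv] using sq_sum_le_card_mul_sum_sq (s := Finset.univ) (f := fun i => |v i|)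
  calc |v ⬝ᵥ A *ᵥ v| = |∑ i, ∑ j, v i * A i j * v j| := by
        simp only [dotProduct, mulVec, Finset.mul_sum, mul_assoc]
    _ ≤ ∑ i, ∑ j, |v i| * M * |v j| := by
        refine (Finset.abs_sum_le_sum_abs _ _).trans (Finset.sum_le_sum fun i _ => ?_)
        refine (Finset.abs_sum_le_sum_abs _ _).trans (Finset.sum_le_sum fun j _ => ?_)
        rw [abs_mul, abs_mul]
        gcongr
        exact hA i j
    _ = M * (∑ i, |v i|) ^ 2 := by
        rw [sq, Finset.sum_mul_sum, Finset.mul_sum]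
        exact Finset.sum_congr rfl fun i _ => by rw [Finset.mul_sum]; ring_nf
    _ ≤ Fintype.card ι * M := by nlinarith

lemma bddBelow_rayleigh (A : Matrix ι ι ℝ) :
    BddBelow (Set.range fun v : {v : ι → ℝ // ∑ i, v i ^ 2 = 1} => v.1 ⬝ᵥ A *ᵥ v.1) := by
  have hA : ∀ i j, |A i j| ≤ ∑ i, ∑ j, |A i j| := fun i j =>
    (Finset.single_le_sum (f := fun j => |A i j|) (fun _ _ => abs_nonneg _)
      (Finset.mem_univ j)).trans
      (Finset.single_le_sum (f := fun i => ∑ j, |A i j|)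
        (fun _ _ => Finset.sum_nonneg fun _ _ => abs_nonneg _) (Finset.mem_univ i))
  refine ⟨-(Fintype.card ι * ∑ i, ∑ j, |A i j|), ?_⟩
  rintro _ ⟨v, rfl⟩
  exact neg_le_of_abs_le (abs_dotProduct_mulVec_le hA
    (Finset.sum_nonneg fun _ _ => Finset.sum_nonneg fun _ _ => abs_nonneg _) v.2)

lemma lamMin_le (A : Matrix ι ι ℝ) {v : ι → ℝ} (hv : ∑ i, v i ^ 2 = 1) :
    lamMin A ≤ v ⬝ᵥ A *ᵥ v :=
  ciInf_le (bddBelow_rayleigh A) ⟨v, hv⟩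

lemma le_lamMin [Nonempty ι] (A : Matrix ι ι ℝ) {c : ℝ}
    (h : ∀ v : ι → ℝ, ∑ i, v i ^ 2 = 1 → c ≤ v ⬝ᵥ A *ᵥ v) : c ≤ lamMin A := by
  classical
  have : Nonempty {v : ι → ℝ // ∑ i, v i ^ 2 = 1} :=
    ⟨⟨Pi.single (Classical.arbitrary ι) 1, by simp [Pi.single_apply, ite_pow]⟩⟩
  exact le_ciInf fun v => h v.1 v.2

lemma lamMin_of_isEmpty [IsEmpty ι] (A : Matrix ι ι ℝ) : lamMin A = 0 := by
  have : IsEmpty {v : ι → ℝ // ∑ i, v i ^ 2 = 1} := ⟨fun v => by simpa using v.2⟩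
  rw [lamMin, Real.iInf_of_isEmpty]

lemma lamMin_sub_card_mul_le {A B : Matrix ι ι ℝ} {M : ℝ} (hM : 0 ≤ M)
    (hAB : ∀ i j, |A i j - B i j| ≤ M) : lamMin B - Fintype.card ι * M ≤ lamMin A := by
  rcases isEmpty_or_nonempty ι with hι | hι
  · simp [lamMin_of_isEmpty]
  refine le_lamMin A fun v hv => ?_
  have hsplit : v ⬝ᵥ A *ᵥ v = v ⬝ᵥ B *ᵥ v + v ⬝ᵥ (A - B) *ᵥ v := by
    rw [sub_mulVec, dotProduct_sub]
    ring
  have hdev := neg_le_of_abs_le (abs_dotProduct_mulVec_le (A := A - B) hAB hM hv)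
  linarith [lamMin_le B hv]

lemma exists_div_card_le_abs_sub_of_lamMin_le [Nonempty ι] {A B : Matrix ι ι ℝ} {τ ε : ℝ}
    (hB : τ ≤ lamMin B) (hA : lamMin A ≤ τ - ε) :
    ∃ i j, ε / Fintype.card ι ≤ |A i j - B i j| := by
  by_contra! hsmall
  obtain ⟨ij, hij⟩ := Finite.exists_max fun ij : ι × ι => |A ij.1 ij.2 - B ij.1 ij.2|
  have hcard : (0 : ℝ) < Fintype.card ι := by exact_mod_cast Fintype.card_pos
  have hM := lamMin_sub_card_mul_le (abs_nonneg _) fun i j => hij (i, j)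
  have hlt : Fintype.card ι * |A ij.1 ij.2 - B ij.1 ij.2| < ε := by
    have := hsmall ij.1 ij.2
    rwa [lt_div_iff₀ hcard, mul_comm] at this
  linarith

end RayleighQuotient

section FiniteProbability

variable {Ω : Type*} [Fintype Ω] {w : Ω → ℝ}

lemma finProb_mono (hw : ∀ ω, 0 ≤ w ω) {E F : Set Ω} (h : E ⊆ F) : finProb w E ≤ finProb w F :=
  Finset.sum_le_sum fun ω _ => Set.indicator_le_indicator_of_subset h (fun ω => hw ω) ω

lemma finProb_le_sum_of_subset_biUnion {κ : Type*} (hw : ∀ ω, 0 ≤ w ω) {E : Set Ω}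
    (s : Finset κ) (F : κ → Set Ω) (h : E ⊆ ⋃ k ∈ s, F k) :
    finProb w E ≤ ∑ k ∈ s, finProb w (F k) := by
  simp only [finProb]
  rw [Finset.sum_comm]
  refine Finset.sum_le_sum fun ω _ => ?_
  by_cases hω : ω ∈ E
  · obtain ⟨k, hk, hωk⟩ := Set.mem_iUnion₂.mp (h hω)
    rw [Set.indicator_of_mem hω, ← Set.indicator_of_mem hωk w]
    exact Finset.single_le_sum (f := fun k => (F k).indicator w ω)
      (fun k _ => Set.indicator_nonneg (fun ω _ => hw ω) ω) hk
  · rw [Set.indicator_of_notMem hω]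
    exact Finset.sum_nonneg fun k _ => Set.indicator_nonneg (fun ω _ => hw ω) ω

lemma finProb_union_le (hw : ∀ ω, 0 ≤ w ω) (E F : Set Ω) :
    finProb w (E ∪ F) ≤ finProb w E + finProb w F := by
  have h := finProb_le_sum_of_subset_biUnion (E := E ∪ F) hw Finset.univ
    (fun b : Bool => cond b E F) (by rintro ω (h | h) <;> simp [h])
  simpa [Fintype.sum_bool] using h

lemma finProb_le_exp_mul_sum (hw : ∀ ω, 0 ≤ w ω) (f : Ω → ℝ) (a : ℝ) {s : ℝ} (hs : 0 ≤ s) :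
    finProb w {ω | a ≤ f ω} ≤ exp (-(s * a)) * ∑ ω, w ω * exp (s * f ω) := by
  rw [finProb, Finset.mul_sum]
  refine Finset.sum_le_sum fun ω _ => ?_
  by_cases hω : a ≤ f ω
  · rw [Set.indicator_of_mem (show ω ∈ {ω | a ≤ f ω} from hω)]
    have h1 : 1 ≤ exp (-(s * a)) * exp (s * f ω) := by
      rw [← exp_add, one_le_exp_iff]
      nlinarith
    nlinarith [hw ω]
  · rw [Set.indicator_of_notMem (show ω ∉ {ω | a ≤ f ω} from hω)]
    have := hw ω
    positivity

lemma sum_mul_exp_le_exp_sq_half (hw : ∀ ω, 0 ≤ w ω) (hw1 : ∑ ω, w ω = 1) {Z : Ω → ℝ}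
    (hZ : ∀ ω, |Z ω| ≤ 1) (hZ0 : ∑ ω, w ω * Z ω = 0) (t : ℝ) :
    ∑ ω, w ω * exp (t * Z ω) ≤ exp (t ^ 2 / 2) := by
  have hchord : ∀ ω, exp (t * Z ω) ≤ (1 - Z ω) / 2 * exp (-t) + (1 + Z ω) / 2 * exp t := by
    intro ω
    obtain ⟨hlo, hhi⟩ := abs_le.mp (hZ ω)
    have h := convexOn_exp.2 (Set.mem_univ (-t)) (Set.mem_univ t)
      (by linarith : 0 ≤ (1 - Z ω) / 2) (by linarith : 0 ≤ (1 + Z ω) / 2) (by ring)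
    rwa [smul_eq_mul, smul_eq_mul, show (1 - Z ω) / 2 * -t + (1 + Z ω) / 2 * t = t * Z ω by ring]
      at h
  calc ∑ ω, w ω * exp (t * Z ω)
      ≤ ∑ ω, (w ω * ((exp (-t) + exp t) / 2) + w ω * Z ω * ((exp t - exp (-t)) / 2)) :=
        Finset.sum_le_sum fun ω _ => by nlinarith [hchord ω, hw ω]
    _ = cosh t := by
        rw [Finset.sum_add_distrib, ← Finset.sum_mul, ← Finset.sum_mul, hw1, hZ0, cosh_eq]
        ring
    _ ≤ exp (t ^ 2 / 2) := cosh_le_exp_half_sq t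

lemma sum_pi_prod_mul_exp (n : ℕ) (Z : Ω → ℝ) (t : ℝ) :
    ∑ xs : Fin n → Ω, (∏ i, w (xs i)) * exp (t * ∑ i, Z (xs i))
      = (∑ ω, w ω * exp (t * Z ω)) ^ n := by
  classical
  rw [← Fin.prod_const, Fintype.prod_sum]
  refine Finset.sum_congr rfl fun xs _ => ?_
  rw [Finset.prod_mul_distrib, Finset.mul_sum, exp_sum]

lemma finProb_pi_sum_ge_le (hw : ∀ ω, 0 ≤ w ω) (hw1 : ∑ ω, w ω = 1) {Z : Ω → ℝ}
    (hZ : ∀ ω, |Z ω| ≤ 1) (hZ0 : ∑ ω, w ω * Z ω = 0) (n : ℕ) {t : ℝ} (ht : 0 ≤ t) :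
    finProb (fun xs : Fin n → Ω => ∏ i, w (xs i)) {xs | n * t ≤ ∑ i, Z (xs i)}
      ≤ exp (-(n * t ^ 2 / 2)) := by
  calc _ ≤ exp (-(t * (n * t))) * ∑ xs : Fin n → Ω, (∏ i, w (xs i)) * exp (t * ∑ i, Z (xs i)) :=
        finProb_le_exp_mul_sum (fun xs => Finset.prod_nonneg fun i _ => hw _) _ _ ht
    _ ≤ exp (-(t * (n * t))) * exp (t ^ 2 / 2) ^ n := by
        rw [sum_pi_prod_mul_exp]
        gcongr
        · exact Finset.sum_nonneg fun ω _ => mul_nonneg (hw ω) (exp_pos _).le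
        · exact sum_mul_exp_le_exp_sq_half hw hw1 hZ hZ0 t
    _ = exp (-(n * t ^ 2 / 2)) := by
        rw [← exp_nat_mul, ← exp_add]
        ring_nf

lemma finProb_pi_abs_sum_ge_le (hw : ∀ ω, 0 ≤ w ω) (hw1 : ∑ ω, w ω = 1) {Z : Ω → ℝ}
    (hZ : ∀ ω, |Z ω| ≤ 1) (hZ0 : ∑ ω, w ω * Z ω = 0) (n : ℕ) {t : ℝ} (ht : 0 ≤ t) :
    finProb (fun xs : Fin n → Ω => ∏ i, w (xs i)) {xs | n * t ≤ |∑ i, Z (xs i)|}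
      ≤ 2 * exp (-(n * t ^ 2 / 2)) := by
  have hW : ∀ xs : Fin n → Ω, 0 ≤ ∏ i, w (xs i) := fun xs => Finset.prod_nonneg fun i _ => hw _
  have hsplit : {xs : Fin n → Ω | n * t ≤ |∑ i, Z (xs i)|}
      ⊆ {xs | n * t ≤ ∑ i, Z (xs i)} ∪ {xs | n * t ≤ ∑ i, (-Z) (xs i)} := fun xs hxs => by
    simpa [Finset.sum_neg_distrib, ← le_abs] using hxs
  calc _ ≤ _ := (finProb_mono hW hsplit).trans (finProb_union_le hW _ _)
    _ ≤ exp (-(n * t ^ 2 / 2)) + exp (-(n * t ^ 2 / 2)) := by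
        gcongr
        · exact finProb_pi_sum_ge_le hw hw1 hZ hZ0 n ht
        · refine finProb_pi_sum_ge_le hw hw1 (fun ω => by simpa using hZ ω) ?_ n ht
          simp [hZ0]
    _ = 2 * exp (-(n * t ^ 2 / 2)) := by ring

end FiniteProbability

section LogisticLogLik

variable {E ι : Type*} [NormedAddCommGroup E] [NormedSpace ℝ E] [Fintype ι]
  (w c : ι → ℝ) (L : ι → E →L[ℝ] ℝ)

lemma hasDerivAt_log_one_add_exp (t : ℝ) :
    HasDerivAt (fun u => log (1 + exp u)) (sigmoid t) t := by
  have h := ((hasDerivAt_exp t).const_add 1).log (by positivity)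
  convert h using 1
  rw [sigmoid_def, exp_neg]
  field_simp
  ring

lemma hasFDerivAt_logisticLogLik (θ : E) :
    HasFDerivAt (fun θ => ∑ t, w t * (c t * L t θ - log (1 + exp (L t θ))))
      (∑ t, (w t * (c t - sigmoid (L t θ))) • L t) θ := by
  refine HasFDerivAt.fun_sum fun t _ => ?_
  have h := (((L t).hasFDerivAt.const_mul (c t)).sub
    ((hasDerivAt_log_one_add_exp (L t θ)).comp_hasFDerivAt θ (L t).hasFDerivAt)).const_mul (w t)
  refine h.congr_fderiv ?_
  ext u
  simp only [FunLike.coe_smul, FunLike.coe_sub, Pi.smul_apply, Pi.sub_apply, smul_eq_mul]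
  ring

lemma fderiv_fderiv_logisticLogLik (θ u v : E) :
    fderiv ℝ (fun θ => fderiv ℝ
        (fun θ => ∑ t, w t * (c t * L t θ - log (1 + exp (L t θ)))) θ u) θ v
      = -∑ t, w t * (sigmoid (L t θ) * (1 - sigmoid (L t θ))) * (L t v * L t u) := by
  have hgrad : (fun θ => fderiv ℝ
      (fun θ => ∑ t, w t * (c t * L t θ - log (1 + exp (L t θ)))) θ u)
      = fun θ => ∑ t, w t * (c t - sigmoid (L t θ)) * L t u := by
    funext θ
    simp [(hasFDerivAt_logisticLogLik w c L θ).fderiv]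
  have hsig : ∀ t, HasFDerivAt (fun θ => sigmoid (L t θ))
      ((sigmoid (L t θ) * (1 - sigmoid (L t θ))) • L t) θ := fun t =>
    (hasDerivAt_sigmoid (L t θ)).comp_hasFDerivAt θ (L t).hasFDerivAt
  have h : HasFDerivAt (fun θ => ∑ t, w t * (c t - sigmoid (L t θ)) * L t u)
      (∑ t, (-(w t * (sigmoid (L t θ) * (1 - sigmoid (L t θ))) * L t u)) • L t) θ := by
    refine HasFDerivAt.fun_sum fun t _ => ?_
    refine ((((hsig t).const_sub (c t)).const_mul (w t)).mul_const (L t u)).congr_fderiv ?_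
    ext v
    simp only [FunLike.coe_smul, FunLike.coe_neg, Pi.smul_apply, Pi.neg_apply, smul_eq_mul]
    ring
  rw [hgrad, h.fderiv]
  simp only [_root_.sum_apply, FunLike.coe_smul, Pi.smul_apply, smul_eq_mul,
    ← Finset.sum_neg_distrib]
  exact Finset.sum_congr rfl fun t _ => by ring

end LogisticLogLik

noncomputable section PseudoLikelihood

variable {p : ℕ}

lemma symExt_comm (θ : PairIdx p → ℝ) (j j' : Fin p) :
    symExt θ j j' = symExt θ j' j := by
  unfold symExt
  split_ifs <;> first | rfl | omega

lemma sum_pairIdx (f : Fin p → Fin p → ℝ) :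
    ∑ e : PairIdx p, f e.1.1 e.1.2 = ∑ a, ∑ b, if a < b then f a b else 0 := by
  rw [← Finset.sum_subtype (univ.filter fun q : Fin p × Fin p => q.1 < q.2) (by simp)
    (fun q => f q.1 q.2), Finset.sum_filter, Fintype.sum_prod_type]

lemma localField_eq_mulVec (θ : PairIdx p → ℝ) (x : Fin p → Bool) (j : Fin p) :
    localField θ x j = (designMat x *ᵥ θ) j := by
  have hθ : ∀ e : PairIdx p, θ e = symExt θ e.1.1 e.1.2 := fun e => by simp [symExt, e.2]
  simp only [mulVec, dotProduct, hθ, designMat, of_apply]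
  rw [sum_pairIdx fun a b =>
    (if j = a then toR (x b) else if j = b then toR (x a) else 0) * symExt θ a b]
  have hsplit : ∀ a b, (if a < b then
        (if j = a then toR (x b) else if j = b then toR (x a) else 0) * symExt θ a b else 0)
      = (if a = j then (if j < b then symExt θ j b * toR (x b) else 0) else 0)
        + (if b = j then (if a < j then symExt θ j a * toR (x a) else 0) else 0) := by
    intro a b
    have := symExt_comm θ a b
    split_ifs <;> grind
  simp only [hsplit, Finset.sum_add_distrib, Finset.sum_ite_eq', Finset.mem_univ, if_true]
  rw [Finset.sum_comm]
  simp only [Finset.sum_ite_eq', Finset.mem_univ, if_true, localField]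
  rw [← Finset.sum_add_distrib, Finset.sum_erase _ (by simp [symExt])]
  refine Finset.sum_congr rfl fun b _ => ?_
  rcases lt_trichotomy j b with h | rfl | h
  · simp [h, h.not_gt]
  · simp [symExt]
  · simp [h, h.not_gt]

def localFieldCLM (x : Fin p → Bool) (j : Fin p) : (PairIdx p → ℝ) →L[ℝ] ℝ :=
  ContinuousLinearMap.proj j ∘L LinearMap.toContinuousLinearMap (Matrix.toLin' (designMat x))

lemma localFieldCLM_apply (x : Fin p → Bool) (j : Fin p) (θ : PairIdx p → ℝ) :
    localFieldCLM x j θ = localField θ x j := by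
  simp [localFieldCLM, localField_eq_mulVec]

lemma localFieldCLM_single (x : Fin p → Bool) (j : Fin p) (e : PairIdx p) :
    localFieldCLM x j (Pi.single e 1) = designMat x j e := by
  simp [localFieldCLM]

def obsFisher (x : Fin p → Bool) (θ : PairIdx p → ℝ) : Matrix (PairIdx p) (PairIdx p) ℝ :=
  (designMat x)ᵀ
    * diagonal (fun j => sigmoid (localField θ x j) * (1 - sigmoid (localField θ x j)))
    * designMat x

lemma obsFisher_apply (x : Fin p → Bool) (θ : PairIdx p → ℝ) (e e' : PairIdx p) :
    obsFisher x θ e e' = ∑ j, sigmoid (localField θ x j) * (1 - sigmoid (localField θ x j))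
      * (designMat x j e * designMat x j e') := by
  rw [obsFisher, mul_apply]
  simp only [mul_diagonal, transpose_apply]
  exact Finset.sum_congr rfl fun j _ => by ring

lemma hessAt_pllOne (x : Fin p → Bool) (θ : PairIdx p → ℝ) :
    hessAt (pllOne x) θ = -obsFisher x θ := by
  have hpll : pllOne x = fun θ => ∑ j, 1 * (toR (x j) * localFieldCLM x j θ
      - log (1 + exp (localFieldCLM x j θ))) := by
    funext θ
    simp [pllOne, localFieldCLM_apply]
  ext e e'
  rw [hessAt, of_apply, hpll, fderiv_fderiv_logisticLogLik, neg_apply, obsFisher_apply]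
  simp only [localFieldCLM_single]
  simp only [localFieldCLM_apply, one_mul]

lemma hessAt_pll {n : ℕ} (xs : Fin n → Fin p → Bool) (θ : PairIdx p → ℝ) :
    hessAt (pll xs) θ = -((n : ℝ)⁻¹ • ∑ i, obsFisher (xs i) θ) := by
  have hpll : pll xs = fun θ => ∑ t : Fin n × Fin p, (n : ℝ)⁻¹ * (toR (xs t.1 t.2)
      * localFieldCLM (xs t.1) t.2 θ - log (1 + exp (localFieldCLM (xs t.1) t.2 θ))) := by
    funext θ
    simp only [pll, pllOne, localFieldCLM_apply, Fintype.sum_prod_type, Finset.mul_sum]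
  ext e e'
  rw [hessAt, of_apply, hpll, fderiv_fderiv_logisticLogLik, Fintype.sum_prod_type]
  simp only [localFieldCLM_single]
  simp only [localFieldCLM_apply, Matrix.neg_apply, Matrix.smul_apply, smul_eq_mul,
    Matrix.sum_apply, obsFisher_apply, Finset.mul_sum, mul_assoc]

lemma Qhat_eq {n : ℕ} (xs : Fin n → Fin p → Bool) (θ : PairIdx p → ℝ) :
    Qhat xs θ = (n : ℝ)⁻¹ • ∑ i, obsFisher (xs i) θ := by
  rw [Qhat, hessAt_pll, neg_neg]

lemma Qpop_eq (θ : PairIdx p → ℝ) : Qpop θ = ∑ x, isingPmf θ x • obsFisher x θ := by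
  simp [Qpop, hessAt_pllOne]

end PseudoLikelihood

section FisherBounds

variable {p : ℕ}

lemma toR_nonneg (b : Bool) : 0 ≤ toR b := by cases b <;> simp [toR]

lemma toR_le_one (b : Bool) : toR b ≤ 1 := by cases b <;> simp [toR]

lemma designMat_nonneg (x : Fin p → Bool) (j : Fin p) (e : PairIdx p) : 0 ≤ designMat x j e := by
  simp only [designMat, of_apply]
  split_ifs <;> simp [toR_nonneg]

lemma designMat_le_one (x : Fin p → Bool) (j : Fin p) (e : PairIdx p) : designMat x j e ≤ 1 := by
  simp only [designMat, of_apply]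
  split_ifs <;> simp [toR_le_one]

lemma designMat_eq_zero (x : Fin p → Bool) {j : Fin p} {e : PairIdx p}
    (hj : j ∉ ({e.1.1, e.1.2} : Finset (Fin p))) : designMat x j e = 0 := by
  simp only [Finset.mem_insert, Finset.mem_singleton, not_or] at hj
  simp [designMat, hj.1, hj.2]

lemma sigmoid_mul_one_sub_nonneg (t : ℝ) : 0 ≤ sigmoid t * (1 - sigmoid t) :=
  mul_nonneg (sigmoid_nonneg t) (sub_nonneg.mpr (sigmoid_le_one t))

lemma sigmoid_mul_one_sub_le (t : ℝ) : sigmoid t * (1 - sigmoid t) ≤ 1 / 4 := by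
  nlinarith [sq_nonneg (sigmoid t - 1 / 2)]

lemma obsFisher_nonneg (x : Fin p → Bool) (θ : PairIdx p → ℝ) (e e' : PairIdx p) :
    0 ≤ obsFisher x θ e e' := by
  rw [obsFisher_apply]
  exact Finset.sum_nonneg fun j _ => mul_nonneg (sigmoid_mul_one_sub_nonneg _)
    (mul_nonneg (designMat_nonneg x j e) (designMat_nonneg x j e'))

lemma obsFisher_le_one (x : Fin p → Bool) (θ : PairIdx p → ℝ) (e e' : PairIdx p) :
    obsFisher x θ e e' ≤ 1 := by
  rw [obsFisher_apply, ← Finset.sum_subset (Finset.subset_univ {e.1.1, e.1.2})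
    fun j _ hj => by rw [designMat_eq_zero x hj, zero_mul, mul_zero]]
  calc _ ≤ ∑ _j ∈ ({e.1.1, e.1.2} : Finset (Fin p)), (1 / 4 : ℝ) :=
        Finset.sum_le_sum fun j _ => by
          have := mul_le_one₀ (designMat_le_one x j e) (designMat_nonneg x j e')
            (designMat_le_one x j e')
          nlinarith [sigmoid_mul_one_sub_nonneg (localField θ x j),
            sigmoid_mul_one_sub_le (localField θ x j),
            mul_nonneg (designMat_nonneg x j e) (designMat_nonneg x j e')]
    _ ≤ 2 * (1 / 4) := by
        rw [Finset.sum_const, nsmul_eq_mul]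
        gcongr
        exact_mod_cast Finset.card_le_two
    _ ≤ 1 := by norm_num

lemma isingPmf_nonneg (θ : PairIdx p → ℝ) (x : Fin p → Bool) : 0 ≤ isingPmf θ x := by
  unfold isingPmf
  positivity

lemma sum_isingPmf (θ : PairIdx p → ℝ) : ∑ x, isingPmf θ x = 1 := by
  simp only [isingPmf]
  rw [← Finset.sum_div, div_self]
  exact (Finset.sum_pos (fun y _ => exp_pos _) Finset.univ_nonempty).ne'

lemma Qpop_apply (θ : PairIdx p → ℝ) (e e' : PairIdx p) :
    Qpop θ e e' = ∑ x, isingPmf θ x * obsFisher x θ e e' := by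
  simp [Qpop_eq, Matrix.sum_apply]

lemma abs_obsFisher_sub_Qpop_le_one (x : Fin p → Bool) (θ : PairIdx p → ℝ) (e e' : PairIdx p) :
    |obsFisher x θ e e' - Qpop θ e e'| ≤ 1 := by
  have hQ0 : 0 ≤ Qpop θ e e' := by
    rw [Qpop_apply]
    exact Finset.sum_nonneg fun x _ => mul_nonneg (isingPmf_nonneg θ x) (obsFisher_nonneg x θ e e')
  have hQ1 : Qpop θ e e' ≤ 1 := by
    rw [Qpop_apply, ← sum_isingPmf θ]
    exact Finset.sum_le_sum fun x _ =>
      mul_le_of_le_one_right (isingPmf_nonneg θ x) (obsFisher_le_one x θ e e')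
  rw [abs_le]
  constructor <;> linarith [obsFisher_nonneg x θ e e', obsFisher_le_one x θ e e']

lemma sum_isingPmf_mul_obsFisher_sub_Qpop (θ : PairIdx p → ℝ) (e e' : PairIdx p) :
    ∑ x, isingPmf θ x * (obsFisher x θ e e' - Qpop θ e e') = 0 := by
  simp only [mul_sub, Finset.sum_sub_distrib, ← Finset.sum_mul, sum_isingPmf, one_mul,
    Qpop_apply, sub_self]

lemma sum_obsFisher_sub_Qpop {n : ℕ} (xs : Fin n → Fin p → Bool) (θ : PairIdx p → ℝ)
    (e e' : PairIdx p) :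
    ∑ i, (obsFisher (xs i) θ e e' - Qpop θ e e') = n * (Qhat xs θ e e' - Qpop θ e e') := by
  rcases eq_or_ne n 0 with rfl | hn
  · simp
  rw [Qhat_eq, Finset.sum_sub_distrib, Finset.sum_const, Finset.card_univ, Fintype.card_fin,
    nsmul_eq_mul, Matrix.smul_apply, Matrix.sum_apply, smul_eq_mul, mul_sub,
    mul_inv_cancel_left₀ (Nat.cast_ne_zero.mpr hn)]

end FisherBounds

lemma setOf_lamMin_Qhat_le_subset {p n : ℕ} (θ : PairIdx p → ℝ) (S : Finset (PairIdx p))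
    [Nonempty S] {τ ε : ℝ} (hQ : τ ≤ lamMin (subm (Qpop θ) S S)) :
    {xs : Fin n → Fin p → Bool | lamMin (subm (Qhat xs θ) S S) ≤ τ - ε}
      ⊆ ⋃ ab ∈ (Finset.univ : Finset (S × S)),
          {xs | n * (ε / S.card) ≤ |∑ i, (obsFisher (xs i) θ ab.1 ab.2 - Qpop θ ab.1 ab.2)|} := by
  intro xs hxs
  obtain ⟨a, b, hab⟩ := exists_div_card_le_abs_sub_of_lamMin_le hQ hxs
  rw [Fintype.card_coe] at hab
  refine Set.mem_biUnion (Finset.mem_coe.mpr (Finset.mem_univ (a, b))) ?_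
  rw [Set.mem_ofPred_eq, sum_obsFisher_sub_Qpop, abs_mul, Nat.abs_cast]
  exact mul_le_mul_of_nonneg_left hab (Nat.cast_nonneg _)

theorem stmt_5_general (p nkk : ℕ)
    (θb : PairIdx p → ℝ) (τmin : ℝ) (hτmin : 0 < τmin)
    (condB : τmin ≤ lamMin (subm (Qpop θb) (suppF θb) (suppF θb)))
    (ε : ℝ) (hε : 0 < ε) :
    finProb (fun xs : Fin nkk → Fin p → Bool => ∏ i, isingPmf θb (xs i))
        {xs | lamMin (subm (Qhat xs θb) (suppF θb) (suppF θb)) ≤ τmin - ε}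
      ≤ 2 * Real.exp (-(ε ^ 2 / 2) * ((nkk : ℝ) / ((suppF θb).card : ℝ) ^ 2)
          + 2 * Real.log ((suppF θb).card : ℝ)) := by
  set S := suppF θb
  have hS : Nonempty S := by
    by_contra hS
    rw [not_nonempty_iff] at hS
    linarith [lamMin_of_isEmpty (subm (Qpop θb) S S)]
  have hq : (0 : ℝ) < S.card := by simpa using Finset.card_pos.mpr (Finset.nonempty_coe_sort.mp hS)
  calc _ ≤ ∑ ab : S × S, 2 * exp (-(nkk * (ε / S.card) ^ 2 / 2)) :=
        (finProb_le_sum_of_subset_biUnion (fun xs => Finset.prod_nonneg fun i _ =>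
          isingPmf_nonneg θb _) _ _ (setOf_lamMin_Qhat_le_subset θb S condB)).trans <|
        Finset.sum_le_sum fun ab _ =>
          finProb_pi_abs_sum_ge_le (isingPmf_nonneg θb) (sum_isingPmf θb)
            (abs_obsFisher_sub_Qpop_le_one · θb ab.1 ab.2)
            (sum_isingPmf_mul_obsFisher_sub_Qpop θb ab.1 ab.2) nkk (div_pos hε hq).le
    _ = _ := by
        rw [Finset.sum_const, Finset.card_univ, Fintype.card_prod, Fintype.card_coe, nsmul_eq_mul,
          exp_add, two_mul (log _), exp_add, exp_log hq]
        field_simp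
        push_cast
        ring_nf

/-- Proposition A.2(i): concentration of the minimum eigenvalue of the sample Fisher
information of a single category of i.i.d. Ising data. -/
theorem stmt_5 (p nkk : ℕ) (hp : 1 ≤ p) (hnk : 1 ≤ nkk)
    (θb : PairIdx p → ℝ) (τmin : ℝ) (hτmin : 0 < τmin)
    (condB : τmin ≤ lamMin (subm (Qpop θb) (suppF θb) (suppF θb)))
    (ε : ℝ) (hε : 0 < ε) :
    finProb (fun xs : Fin nkk → Fin p → Bool => ∏ i, isingPmf θb (xs i))
        {xs | lamMin (subm (Qhat xs θb) (suppF θb) (suppF θb)) ≤ τmin - ε}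
      ≤ 2 * Real.exp (-(ε ^ 2 / 2) * ((nkk : ℝ) / ((suppF θb).card : ℝ) ^ 2)
          + 2 * Real.log ((suppF θb).card : ℝ)) :=
  stmt_5_general p nkk θb τmin hτmin condB ε hε
end
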